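/- Let w = exp(−Q) ∈ ℱ(C²+). Let f : ℝ → ℝ have bounded variation on every compact interval with ∫_ℝ w(x)|df(x)| < ∞ (the integral of w against the total-variation measure of f), and set g(x) := f(x) − f(0). Then ∫_ℝ |Q′(x) w(x) g(x)| dx ≤ ∫_ℝ w(x) |df(x)|. -/

import Mathlib

open MeasureTheory Filter Set
open scoped ENNReal

noncomputable section

/-- The function `T(x) = x Q'(x) / Q(x)`. -/
def Tf (Q : ℝ → ℝ) (x : ℝ) : ℝ := x * deriv Q x / Q x

/-- The weight `w = exp (-Q)`. -/
def wgt (Q : ℝ → ℝ) (x : ℝ) : ℝ := Real.exp (-Q x)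

/-- The class `F(C²+)` of Levin and Lubinsky, described via the exponent `Q`. -/
structure FC2 (Q : ℝ → ℝ) : Prop where
  nonneg : ∀ x, 0 ≤ Q x
  even : ∀ x, Q (-x) = Q x
  cont : Continuous Q
  zeroAtZero : Q 0 = 0
  diff : Differentiable ℝ Q
  derivCont : Continuous (deriv Q)
  deriv2 : ∀ x : ℝ, x ≠ 0 → DifferentiableAt ℝ (deriv Q) x
  deriv2_pos : ∀ x : ℝ, x ≠ 0 → 0 < deriv (deriv Q) x
  tendsto_top : Tendsto Q atTop atTop
  quasi_incr : ∃ C > 0, ∀ x y : ℝ, 0 < x → x < y → Tf Q x ≤ C * Tf Q y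
  T_lower : ∃ Λ > 1, ∀ x : ℝ, x ≠ 0 → Λ ≤ Tf Q x
  ratio_upper : ∃ C₁ > 0, ∀ᵐ x : ℝ ∂volume,
      deriv (deriv Q) x / |deriv Q x| ≤ C₁ * (|deriv Q x| / Q x)
  ratio_lower : ∃ C₂ > 0, ∃ K > 0, ∀ᵐ x : ℝ ∂volume,
      K ≤ |x| → C₂ * (|deriv Q x| / Q x) ≤ deriv (deriv Q) x / |deriv Q x|

/-- The class `F_λ(C^m+)`; for `m ≤ 2` it coincides with `F(C²+)`. -/
def FlamC (m : ℕ) (lam : ℝ) (Q : ℝ → ℝ) : Prop :=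
  FC2 Q ∧ (m ≤ 2 ∨
    (ContDiffOn ℝ (m : ℕ∞) Q {(0 : ℝ)}ᶜ ∧
      ∃ C > 1, ∃ K ≥ (1 : ℝ), ∀ x : ℝ, K ≤ |x| →
        (|deriv Q x| ≤ C * Q x ^ lam) ∧
        (∀ k : ℕ, 2 ≤ k → k + 2 ≤ m →
          |iteratedDeriv 2 Q x / deriv Q x| ≤
            C * |iteratedDeriv (k+1) Q x / iteratedDeriv k Q x| ∧
          |iteratedDeriv (k+1) Q x / iteratedDeriv k Q x| ≤
            C * |iteratedDeriv 2 Q x / deriv Q x|) ∧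
        |iteratedDeriv m Q x / iteratedDeriv (m-1) Q x| ≤
          C * |iteratedDeriv (m-1) Q x / iteratedDeriv (m-2) Q x|))

/-- `a` is the Mhaskar–Rakhmanov–Saff number `a_u` for the exponent `Q`. -/
def IsMRS (Q : ℝ → ℝ) (u a : ℝ) : Prop :=
  0 < a ∧ u = (2 / Real.pi) * ∫ s in (0:ℝ)..(1:ℝ), a * s * deriv Q (a * s) / Real.sqrt (1 - s ^ 2)

/-- The (weighted) sup norm over `ℝ`. -/
def supN (g : ℝ → ℝ) : ℝ := ⨆ x : ℝ, |g x|

/-- `E_n(v; f)`: the error of best weighted uniform approximation by polynomials of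
degree at most `n`. -/
def Eerr (n : ℕ) (v f : ℝ → ℝ) : ℝ :=
  ⨅ P : {P : Polynomial ℝ // P.natDegree ≤ n}, supN fun x => (f x - P.1.eval x) * v x

/-- `E_{p,n}(v; f)`: the error of best weighted `L_p` approximation by polynomials of
degree at most `n`. -/
def EerrLp (p : ℝ≥0∞) (n : ℕ) (v f : ℝ → ℝ) : ℝ≥0∞ :=
  ⨅ P : {P : Polynomial ℝ // P.natDegree ≤ n},
    eLpNorm (fun x => (f x - P.1.eval x) * v x) p volume

/-- `σ(t) = inf { a_u : a_u / u ≤ t }`. -/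
def sigmaT (Q : ℝ → ℝ) (t : ℝ) : ℝ :=
  sInf {a : ℝ | ∃ u : ℝ, 0 < u ∧ IsMRS Q u a ∧ a / u ≤ t}

/-- `Φ_t(x) = √|1 - |x|/σ(t)| + T(σ(t))^{-1/2}`. -/
def PhiT (Q : ℝ → ℝ) (t x : ℝ) : ℝ :=
  Real.sqrt |1 - |x| / sigmaT Q t| + Tf Q (sigmaT Q t) ^ (-(1:ℝ)/2)

end

/-!
Since `|f x - f 0|` is at most the variation of `f` between `0` and `x`, the left side is at most
`∫ |Q' x| w x ν[0, x] dx`, which by Tonelli is `∫ (∫_{x : t ∈ [0, x]} |Q'| w) dν(t)`. For `t > 0` the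
inner integral is `∫_t^∞ Q' e^{-Q} = w t`, because `Q' > 0` on `(0, ∞)` and `Q → ∞`, and for `t < 0`
the same holds by evenness. The remaining point `t = 0`, where the inner integral is `2`, is
`ν`-null: the variations over `[-1, 0]` and `[0, 1]` add up to the finite variation over `[-1, 1]`.
-/

open Topology

theorem lintegral_ofReal_Ioi_of_hasDerivAt_of_nonneg {g g' : ℝ → ℝ} {a l : ℝ}
    (hderiv : ∀ x ∈ Ici a, HasDerivAt g (g' x) x) (g'pos : ∀ x ∈ Ioi a, 0 ≤ g' x)
    (hg : Tendsto g atTop (𝓝 l)) :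
    ∫⁻ x in Ioi a, ENNReal.ofReal (g' x) = ENNReal.ofReal (l - g a) := by
  rw [← ofReal_integral_eq_lintegral_ofReal (integrableOn_Ioi_deriv_of_nonneg' hderiv g'pos hg)
    ((ae_restrict_iff' measurableSet_Ioi).2 (.of_forall g'pos)),
    integral_Ioi_of_hasDerivAt_of_nonneg' hderiv g'pos hg]

theorem setOf_mem_uIcc_zero_eq_Ici {t : ℝ} (ht : 0 < t) : {x : ℝ | t ∈ uIcc 0 x} = Ici t := by
  ext x
  simp only [mem_ofPred_eq, mem_uIcc, mem_Ici]
  constructor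
  · rintro (⟨-, h⟩ | ⟨-, h⟩) <;> linarith
  · exact fun h => .inl ⟨ht.le, h⟩

theorem setOf_mem_uIcc_zero_eq_Iic {t : ℝ} (ht : t < 0) : {x : ℝ | t ∈ uIcc 0 x} = Iic t := by
  ext x
  simp only [mem_ofPred_eq, mem_uIcc, mem_Iic]
  constructor
  · rintro (⟨h, -⟩ | ⟨h, -⟩) <;> linarith
  · exact fun h => .inr ⟨h, ht.le⟩

theorem lintegral_mul_measure_preimage_prodMk {α β : Type*} [MeasurableSpace α]
    [MeasurableSpace β] {μ : Measure α} {ν : Measure β} [SFinite μ] [SFinite ν]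
    {φ : α → ℝ≥0∞} (hφ : Measurable φ) {s : Set (α × β)} (hs : MeasurableSet s) :
    ∫⁻ x, φ x * ν (Prod.mk x ⁻¹' s) ∂μ = ∫⁻ y, ∫⁻ x in (·, y) ⁻¹' s, φ x ∂μ ∂ν := by
  calc ∫⁻ x, φ x * ν (Prod.mk x ⁻¹' s) ∂μ
      = ∫⁻ x, ν (Prod.mk x ⁻¹' s) ∂μ.withDensity φ :=
        (lintegral_withDensity_eq_lintegral_mul μ hφ (measurable_measure_prodMk_left hs)).symm
    _ = (μ.withDensity φ).prod ν s := (Measure.prod_apply hs).symm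
    _ = ∫⁻ y, ∫⁻ x in (·, y) ⁻¹' s, φ x ∂μ ∂ν := by
      rw [Measure.prod_apply_symm hs]
      exact lintegral_congr fun y => withDensity_apply _ (measurable_prodMk_right hs)

theorem wgt_pos (Q : ℝ → ℝ) (x : ℝ) : 0 < wgt Q x := Real.exp_pos _

namespace FC2

variable {Q : ℝ → ℝ}

theorem deriv_neg (hw : FC2 Q) (x : ℝ) : deriv Q (-x) = -deriv Q x := by
  have h := ((hw.diff (-x)).hasDerivAt.comp x (hasDerivAt_neg x)).deriv
  rw [show Q ∘ Neg.neg = Q from funext hw.even] at h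
  linarith

theorem deriv_pos (hw : FC2 Q) {x : ℝ} (hx : 0 < x) : 0 < deriv Q x := by
  have hmono : StrictMonoOn (deriv Q) (Ici 0) :=
    strictMonoOn_of_deriv_pos (convex_Ici 0) hw.derivCont.continuousOn fun y hy =>
      hw.deriv2_pos y (interior_Ici.subset hy).ne'
  have hzero : deriv Q 0 = 0 := by
    have h := hw.deriv_neg 0
    rw [neg_zero] at h
    linarith
  simpa [hzero] using hmono self_mem_Ici hx.le hx

theorem wgt_neg (hw : FC2 Q) (x : ℝ) : wgt Q (-x) = wgt Q x := by
  rw [wgt, wgt, hw.even]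

theorem lintegral_Ioi_abs_deriv_mul_wgt (hw : FC2 Q) {t : ℝ} (ht : 0 ≤ t) :
    ∫⁻ x in Ioi t, ENNReal.ofReal (|deriv Q x| * wgt Q x) = ENNReal.ofReal (wgt Q t) := by
  have hderiv : ∀ x ∈ Ici t, HasDerivAt (fun y => -wgt Q y) (deriv Q x * wgt Q x) x := by
    intro x _
    have hQ : HasDerivAt (fun y => -Q y) (-deriv Q x) x := (hw.diff x).hasDerivAt.neg
    have h := hQ.exp.neg
    rwa [show -(Real.exp (-Q x) * -deriv Q x) = deriv Q x * wgt Q x by rw [wgt]; ring] at h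
  have hlim : Tendsto (fun y => -wgt Q y) atTop (𝓝 0) := by
    simpa [wgt] using (Real.tendsto_exp_atBot.comp (tendsto_neg_atBot_iff.2 hw.tendsto_top)).neg
  have hpos : ∀ x ∈ Ioi t, 0 < deriv Q x := fun x hx => hw.deriv_pos (ht.trans_lt hx)
  rw [setLIntegral_congr_fun measurableSet_Ioi fun x hx => by rw [abs_of_pos (hpos x hx)],
    lintegral_ofReal_Ioi_of_hasDerivAt_of_nonneg hderiv
      (fun x hx => mul_nonneg (hpos x hx).le (wgt_pos Q x).le) hlim, zero_sub, neg_neg]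

theorem lintegral_Iio_abs_deriv_mul_wgt (hw : FC2 Q) {t : ℝ} (ht : t ≤ 0) :
    ∫⁻ x in Iio t, ENNReal.ofReal (|deriv Q x| * wgt Q x) = ENNReal.ofReal (wgt Q t) := by
  have hreflect := (Measure.measurePreserving_neg volume).setLIntegral_comp_preimage_emb
    measurableEmbedding_neg (fun x => ENNReal.ofReal (|deriv Q x| * wgt Q x)) (Iio t)
  rw [← hreflect, show Neg.neg ⁻¹' Iio t = Ioi (-t) by ext; simp]
  simp only [hw.deriv_neg, abs_neg, hw.wgt_neg]
  rw [hw.lintegral_Ioi_abs_deriv_mul_wgt (neg_nonneg.2 ht), hw.wgt_neg]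

theorem setLIntegral_abs_deriv_mul_wgt_of_mem_uIcc (hw : FC2 Q) {t : ℝ} (ht : t ≠ 0) :
    ∫⁻ x in {x | t ∈ uIcc 0 x}, ENNReal.ofReal (|deriv Q x| * wgt Q x) =
      ENNReal.ofReal (wgt Q t) := by
  rcases ht.lt_or_gt with ht | ht
  · rw [setOf_mem_uIcc_zero_eq_Iic ht, ← setLIntegral_congr Iio_ae_eq_Iic,
      hw.lintegral_Iio_abs_deriv_mul_wgt ht.le]
  · rw [setOf_mem_uIcc_zero_eq_Ici ht, ← setLIntegral_congr Ioi_ae_eq_Ici,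
      hw.lintegral_Ioi_abs_deriv_mul_wgt ht.le]

theorem lintegral_abs_deriv_mul_wgt_mul_measure_uIcc (hw : FC2 Q) {ν : Measure ℝ} [SFinite ν]
    (hν₀ : ν {0} = 0) :
    ∫⁻ x, ENNReal.ofReal (|deriv Q x| * wgt Q x) * ν (uIcc 0 x) =
      ∫⁻ t, ENNReal.ofReal (wgt Q t) ∂ν := by
  have hφ : Measurable fun x => ENNReal.ofReal (|deriv Q x| * wgt Q x) :=
    ENNReal.measurable_ofReal.comp (hw.derivCont.abs.mul hw.cont.neg.rexp).measurable
  have hS : MeasurableSet {p : ℝ × ℝ | p.2 ∈ uIcc 0 p.1} := by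
    simp only [mem_uIcc]
    measurability
  have hne : ∀ᵐ t ∂ν, t ≠ 0 := compl_mem_ae_iff.2 hν₀
  exact (lintegral_mul_measure_preimage_prodMk hφ hS).trans
    (lintegral_congr_ae (hne.mono fun t => hw.setLIntegral_abs_deriv_mul_wgt_of_mem_uIcc))

end FC2

section VariationMeasure

variable {f : ℝ → ℝ} {ν : Measure ℝ}

theorem ofReal_abs_sub_le_measure_uIcc
    (hν : ∀ a b : ℝ, a ≤ b → ν (Icc a b) = eVariationOn f (Icc a b)) (x y : ℝ) :
    ENNReal.ofReal |f x - f y| ≤ ν (uIcc x y) := by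
  rw [uIcc, hν _ _ inf_le_sup, ← Real.dist_eq, ← edist_dist]
  exact eVariationOn.edist_le f ⟨inf_le_left, le_sup_left⟩ ⟨inf_le_right, le_sup_right⟩

theorem isLocallyFiniteMeasure_of_eq_eVariationOn
    (hBV : ∀ a b : ℝ, a ≤ b → BoundedVariationOn f (Icc a b))
    (hν : ∀ a b : ℝ, a ≤ b → ν (Icc a b) = eVariationOn f (Icc a b)) :
    IsLocallyFiniteMeasure ν := by
  refine ⟨fun x => ⟨Icc (x - 1) (x + 1), Icc_mem_nhds (by linarith) (by linarith), ?_⟩⟩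
  rw [hν _ _ (by linarith)]
  exact (hBV _ _ (by linarith)).lt_top

theorem measure_singleton_eq_zero_of_eq_eVariationOn
    (hBV : ∀ a b : ℝ, a ≤ b → BoundedVariationOn f (Icc a b))
    (hν : ∀ a b : ℝ, a ≤ b → ν (Icc a b) = eVariationOn f (Icc a b)) (c : ℝ) :
    ν {c} = 0 := by
  have hadd : ν (Icc (c - 1) c) + ν (Icc c (c + 1)) = ν (Icc (c - 1) (c + 1)) := by
    rw [hν _ _ (by linarith), hν _ _ (by linarith), hν _ _ (by linarith)]
    simpa using eVariationOn.Icc_add_Icc f (by linarith : c - 1 ≤ c) (by linarith : c ≤ c + 1)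
      (mem_univ c)
  have hunion := measure_union_add_inter (μ := ν) (Icc (c - 1) c)
    (measurableSet_Icc : MeasurableSet (Icc c (c + 1)))
  rw [Icc_union_Icc_eq_Icc (by linarith) (by linarith), Icc_inter_Icc,
    max_eq_right (by linarith), min_eq_left (by linarith), Icc_self, hadd] at hunion
  have hfin : ν (Icc (c - 1) (c + 1)) ≠ ∞ := by
    rw [hν _ _ (by linarith)]
    exact hBV _ _ (by linarith)
  exact (ENNReal.add_right_inj hfin).1 (hunion.trans (add_zero _).symm)

end VariationMeasure

open MeasureTheory Filter Set in
/-- The estimate `‖Q' w (f - f(0))‖_{L₁(ℝ)} ≤ ∫ w |df|` from the proof of Theorem 3.4. -/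
theorem stmt_9 (Q : ℝ → ℝ) (hw : FC2 Q) (f : ℝ → ℝ) (ν : Measure ℝ)
    (hBV : ∀ a b : ℝ, a ≤ b → BoundedVariationOn f (Set.Icc a b))
    (hν : ∀ a b : ℝ, a ≤ b → ν (Set.Icc a b) = eVariationOn f (Set.Icc a b))
    (hfin : (∫⁻ x, ENNReal.ofReal (wgt Q x) ∂ν) ≠ ⊤) :
    ∫ x : ℝ, |deriv Q x * wgt Q x * (f x - f 0)|
      ≤ (∫⁻ x, ENNReal.ofReal (wgt Q x) ∂ν).toReal := by
  have : IsLocallyFiniteMeasure ν := isLocallyFiniteMeasure_of_eq_eVariationOn hBV hν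
  have hpointwise (x : ℝ) : ENNReal.ofReal ‖|deriv Q x * wgt Q x * (f x - f 0)|‖ ≤
      ENNReal.ofReal (|deriv Q x| * wgt Q x) * ν (uIcc 0 x) := by
    rw [Real.norm_eq_abs, abs_abs, abs_mul, abs_mul, abs_of_pos (wgt_pos Q x),
      ENNReal.ofReal_mul (mul_nonneg (abs_nonneg _) (wgt_pos Q x).le), uIcc_comm]
    exact mul_le_mul_right (ofReal_abs_sub_le_measure_uIcc hν x 0) _
  have hbound : ∫⁻ x, ENNReal.ofReal ‖|deriv Q x * wgt Q x * (f x - f 0)|‖ ≤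
      ∫⁻ x, ENNReal.ofReal (wgt Q x) ∂ν :=
    (lintegral_mono hpointwise).trans_eq (hw.lintegral_abs_deriv_mul_wgt_mul_measure_uIcc
      (measure_singleton_eq_zero_of_eq_eVariationOn hBV hν 0))
  -- `norm_integral_le_lintegral_norm` spares us proving that `f` is measurable.
  exact (Real.le_norm_self _).trans
    ((norm_integral_le_lintegral_norm _).trans (ENNReal.toReal_mono hfin hbound))
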